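/- arXiv:1705.07765 — 6 statements merged into one kernel-verified Lean document; each statement's English description precedes it below -/
import Mathlib

section
/- Let A ∈ ℝ^{n×n} be a symmetric matrix and suppose the vector s(A) = A·1 is discriminative, i.e., s_i(A) ≠ s_j(A) whenever i and j lie in different orbits of the action of Aut(A) on {1,…,n}. Then DS(A) is weakly exact: every S ∈ Aut_conv(A) satisfies S_{ij} = 0 for every pair (i,j) such that P_{ij} = 0 for all P ∈ Aut(A). -/
/- Setting: graphs are symmetric real n×n matrices. `pm n σ` is the permutation
matrix of `σ` (entry (i,j) equals 1 iff σ j = i, so it "sends j to σ j").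
`DS n` is the set of doubly stochastic matrices, `Aut A` the set of permutation
matrices commuting with `A`, and `AutConv A` its doubly stochastic relaxation. -/

open Matrix MeasureTheory Finset

noncomputable section

def pm (n : ℕ) (σ : Equiv.Perm (Fin n)) : Matrix (Fin n) (Fin n) ℝ :=
  Matrix.of fun i j => if σ j = i then (1 : ℝ) else 0

def IsPermMatrix {n : ℕ} (P : Matrix (Fin n) (Fin n) ℝ) : Prop :=
  ∃ σ : Equiv.Perm (Fin n), P = pm n σ

def DS (n : ℕ) : Set (Matrix (Fin n) (Fin n) ℝ) :=
  {S | (∀ i j, 0 ≤ S i j) ∧ (∀ i, ∑ j, S i j = 1) ∧ (∀ j, ∑ i, S i j = 1)}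

def Aut {n : ℕ} (A : Matrix (Fin n) (Fin n) ℝ) : Set (Matrix (Fin n) (Fin n) ℝ) :=
  {P | IsPermMatrix P ∧ A * P = P * A}

def AutConv {n : ℕ} (A : Matrix (Fin n) (Fin n) ℝ) : Set (Matrix (Fin n) (Fin n) ℝ) :=
  {S | S ∈ DS n ∧ A * S = S * A}

/-- `s(A) = A·1`, the vector of row sums of `A`. -/
def sVec {n : ℕ} (A : Matrix (Fin n) (Fin n) ℝ) : Fin n → ℝ := A *ᵥ 1

/-- `i` and `j` lie in the same orbit of the action of `Aut A` on indices:
some automorphism `P` of `A` sends `j` to `i` (i.e. `P i j = 1`). -/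
def SameAutOrbit {n : ℕ} (A : Matrix (Fin n) (Fin n) ℝ) (i j : Fin n) : Prop :=
  ∃ P ∈ Aut A, P i j = 1

/-- if `A` is symmetric and `s(A) = A·1` is discriminative (coordinates in
different `Aut A`-orbits get different values), then `DS(A)` is weakly exact: every
convex automorphism `S` vanishes at every entry `(i,j)` at which all automorphisms vanish. -/
theorem stmt3 {n : ℕ} (A : Matrix (Fin n) (Fin n) ℝ) (hA : A.IsSymm)
    (hdisc : ∀ i j, ¬ SameAutOrbit A i j → sVec A i ≠ sVec A j) :
    ∀ S ∈ AutConv A, ∀ i j, (∀ P ∈ Aut A, P i j = 0) → S i j = 0 := by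
  intro S hS i j hP
  obtain ⟨⟨hnn, hrow, hcol⟩, hcomm⟩ := hS
  have hne : sVec A i ≠ sVec A j := by
    apply hdisc
    rintro ⟨P, hPAut, hP1⟩
    rw [hP P hPAut] at hP1
    norm_num at hP1
  set s := sVec A with hs
  have hS1 : S *ᵥ (1 : Fin n → ℝ) = 1 := by
    funext k
    simp [mulVec, dotProduct, hrow k]
  have hSs : S *ᵥ s = s := by
    have h1 : S *ᵥ s = (S * A) *ᵥ 1 := by rw [hs, sVec, mulVec_mulVec]
    rw [h1, ← hcomm, ← mulVec_mulVec, hS1, hs, sVec]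
  have hterm : ∀ a b, (0:ℝ) ≤ S a b * (s a - s b)^2 :=
    fun a b => mul_nonneg (hnn a b) (sq_nonneg _)
  have e1 : ∑ a, ∑ b, S a b * (s a)^2 = ∑ a, (s a)^2 := by
    simp_rw [← Finset.sum_mul]
    simp [hrow]
  have e2 : ∑ a, ∑ b, S a b * (s b)^2 = ∑ b, (s b)^2 := by
    rw [Finset.sum_comm]
    simp_rw [← Finset.sum_mul]
    simp [hcol]
  have e3 : ∑ a, ∑ b, S a b * (s a * s b) = ∑ a, (s a)^2 := by
    have : ∀ a, ∑ b, S a b * (s a * s b) = s a * (S *ᵥ s) a := by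
      intro a
      simp only [mulVec, dotProduct, Finset.mul_sum]
      apply Finset.sum_congr rfl
      intro b _
      ring
    simp_rw [this, hSs]
    apply Finset.sum_congr rfl
    intro a _
    ring
  have key : ∑ a, ∑ b, S a b * (s a - s b)^2 = 0 := by
    have expand : ∀ a b, S a b * (s a - s b)^2 =
        S a b * (s a)^2 - 2 * (S a b * (s a * s b)) + S a b * (s b)^2 := by
      intros; ring
    simp_rw [expand, Finset.sum_add_distrib, Finset.sum_sub_distrib,
      ← Finset.mul_sum]
    rw [e1, e2, e3]
    ring
  have h1 := (Finset.sum_eq_zero_iff_of_nonneg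
    (fun a _ => Finset.sum_nonneg fun b _ => hterm a b)).mp key i (Finset.mem_univ i)
  have h2 := (Finset.sum_eq_zero_iff_of_nonneg
    (fun b _ => hterm i b)).mp h1 j (Finset.mem_univ j)
  rcases mul_eq_zero.mp h2 with h | h
  · exact h
  · exact absurd (sub_eq_zero.mp (pow_eq_zero_iff (by norm_num) |>.mp h)) hne
end
end

section
/- Let G ≤ Π_n be any symmetry group. Then the set of A ∈ V(G) for which there exist indices i, j lying in different G-orbits with s_i(A) = s_j(A) has μ_G-measure zero; i.e., for almost every A ∈ 𝒜(G) the vector s(A) = A·1 is discriminative. -/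
/- Setting: graphs are symmetric real n×n matrices. `pm n σ` is the permutation
matrix of `σ` (entry (i,j) equals 1 iff σ j = i, so it "sends j to σ j").
`DS n` is the set of doubly stochastic matrices, `Aut A` the set of permutation
matrices commuting with `A`, `AutConv A` its doubly stochastic relaxation.
`Vset G`, `AcalA G` and `muG G` are V(G), 𝒜(G) and the Hausdorff measure μ_G
(of dimension d = dim V(G), w.r.t. the Frobenius/Euclidean norm) restricted to V(G). -/

open Matrix MeasureTheory Finset

noncomputable section

/-- `DS(A)` is convex exact: the doubly stochastic commutants of `A` are exactly the
convex combinations of the permutation matrices commuting with `A`. -/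
def ConvexExact {n : ℕ} (A : Matrix (Fin n) (Fin n) ℝ) : Prop :=
  AutConv A = convexHull ℝ (Aut A)

/-- The subgroup `G` of permutations, realized as a set of permutation matrices. -/
def matSet {n : ℕ} (G : Subgroup (Equiv.Perm (Fin n))) : Set (Matrix (Fin n) (Fin n) ℝ) :=
  (pm n) '' (G : Set (Equiv.Perm (Fin n)))

/-- `V(G)`: symmetric matrices invariant under conjugation by all elements of `G`. -/
def Vset {n : ℕ} (G : Subgroup (Equiv.Perm (Fin n))) : Set (Matrix (Fin n) (Fin n) ℝ) :=
  {A | A.IsSymm ∧ ∀ σ ∈ G, (pm n σ)ᵀ * A * pm n σ = A}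

/-- `𝒜(G)`: symmetric matrices whose automorphism group is exactly `G`. -/
def AcalA {n : ℕ} (G : Subgroup (Equiv.Perm (Fin n))) : Set (Matrix (Fin n) (Fin n) ℝ) :=
  {A | A.IsSymm ∧ Aut A = matSet G}

attribute [local instance] Matrix.frobeniusNormedAddCommGroup

instance matMeasurableSpace {m k : Type*} [Fintype m] [Fintype k] :
    MeasurableSpace (Matrix m k ℝ) := borel _

instance matBorelSpace {m k : Type*} [Fintype m] [Fintype k] :
    BorelSpace (Matrix m k ℝ) := ⟨rfl⟩

/-- `μ_G`: the `dim V(G)`-dimensional Hausdorff measure restricted to `V(G)`. -/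
def muG {n : ℕ} (G : Subgroup (Equiv.Perm (Fin n))) : Measure (Matrix (Fin n) (Fin n) ℝ) :=
  (@Measure.hausdorffMeasure _ _ _ matBorelSpace (Module.finrank ℝ ↥(Submodule.span ℝ (Vset G)) : ℝ)).restrict (Vset G)

/-!
Each pair `i, j` in different `G`-orbits contributes the set of `A ∈ V(G)` with
`s_i(A) = s_j(A)`, which lies in the kernel of the linear functional `A ↦ s_i(A) - s_j(A)`
restricted to `span V(G)`. The diagonal indicator matrix of the orbit of `i` lies in `V(G)`
and is not in that kernel, so the kernel is a proper subspace of `span V(G)`. A subspace of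
dimension `< d` has Hausdorff dimension `< d`, hence is `μH[d]`-null, and the bad set is a
finite union of such null sets.
-/

attribute [local instance] Matrix.frobeniusNormedSpace

section HausdorffSubmodule

variable {F : Type*} [NormedAddCommGroup F] [NormedSpace ℝ F]

theorem dimH_submodule (U : Submodule ℝ F) [FiniteDimensional ℝ U] :
    dimH (U : Set F) = Module.finrank ℝ U := by
  calc dimH (U : Set F) = dimH (((↑) : U → F) '' Set.univ) := by simp
    _ = Module.finrank ℝ U := by
      rw [isometry_subtype_coe.dimH_image, Real.dimH_univ_eq_finrank]

theorem hausdorffMeasure_submodule_eq_zero [MeasurableSpace F] [BorelSpace F]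
    (U : Submodule ℝ F) [FiniteDimensional ℝ U] {d : ℝ} (hd : Module.finrank ℝ U < d) :
    μH[d] (U : Set F) = 0 := by
  lift d to NNReal using (Nat.cast_nonneg _).trans hd.le
  apply hausdorffMeasure_of_dimH_lt
  rw [dimH_submodule]
  exact_mod_cast hd

end HausdorffSubmodule

section RowSums

variable {n : ℕ}

theorem pm_transpose_mul_mul (σ : Equiv.Perm (Fin n)) (A : Matrix (Fin n) (Fin n) ℝ) :
    (pm n σ)ᵀ * A * pm n σ = A.submatrix σ σ := by
  ext k l
  simp [Matrix.mul_apply, pm]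

theorem sVec_diagonal (d : Fin n → ℝ) : sVec (diagonal d) = d := by
  ext k
  simp [sVec, mulVec_diagonal]

def sVecDiff (i j : Fin n) : Matrix (Fin n) (Fin n) ℝ →ₗ[ℝ] ℝ where
  toFun A := sVec A i - sVec A j
  map_add' A B := by simp only [sVec, add_mulVec, Pi.add_apply]; ring
  map_smul' c A := by
    simp only [sVec, smul_mulVec, Pi.smul_apply, smul_eq_mul, RingHom.id_apply]; ring

def orbitDiagonal (G : Subgroup (Equiv.Perm (Fin n))) (i : Fin n) : Matrix (Fin n) (Fin n) ℝ :=
  diagonal ((MulAction.orbit G i).indicator 1)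

theorem orbitDiagonal_mem_Vset (G : Subgroup (Equiv.Perm (Fin n))) (i : Fin n) :
    orbitDiagonal G i ∈ Vset G := by
  classical
  refine ⟨diagonal_transpose _, fun σ hσ => ?_⟩
  rw [pm_transpose_mul_mul, orbitDiagonal, submatrix_diagonal_equiv]
  congr 1
  ext k
  have hmem : σ k ∈ MulAction.orbit G i ↔ k ∈ MulAction.orbit G i := by
    rw [show σ k = (⟨σ, hσ⟩ : G) • k from rfl, MulAction.mem_orbit_symm,
      MulAction.orbit_smul, MulAction.mem_orbit_symm]
  simp only [Function.comp_apply, Set.indicator_apply, Pi.one_apply, hmem]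

theorem sVecDiff_orbitDiagonal (G : Subgroup (Equiv.Perm (Fin n))) {i j : Fin n}
    (hij : j ∉ MulAction.orbit G i) : sVecDiff i j (orbitDiagonal G i) = 1 := by
  simp [sVecDiff, orbitDiagonal, sVec_diagonal, hij, MulAction.mem_orbit_self]

theorem span_Vset_inf_ker_sVecDiff_lt (G : Subgroup (Equiv.Perm (Fin n))) {i j : Fin n}
    (hij : j ∉ MulAction.orbit G i) :
    Submodule.span ℝ (Vset G) ⊓ LinearMap.ker (sVecDiff i j) < Submodule.span ℝ (Vset G) := by
  refine inf_lt_left.2 fun hle => one_ne_zero (α := ℝ) ?_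
  rw [← sVecDiff_orbitDiagonal G hij]
  exact hle (Submodule.subset_span (orbitDiagonal_mem_Vset G i))

end RowSums

theorem stmt4_general {n : ℕ} (G : Subgroup (Equiv.Perm (Fin n))) :
    muG G {A | A ∈ Vset G ∧
      ∃ i j : Fin n, (¬ ∃ σ ∈ G, σ j = i) ∧ sVec A i = sVec A j} = 0 := by
  have hbad : {A | A ∈ Vset G ∧
      ∃ i j : Fin n, (¬ ∃ σ ∈ G, σ j = i) ∧ sVec A i = sVec A j} ⊆
      ⋃ p : {p : Fin n × Fin n // p.2 ∉ MulAction.orbit G p.1},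
        (↑(Submodule.span ℝ (Vset G) ⊓ LinearMap.ker (sVecDiff p.1.1 p.1.2)) : Set _) := by
    rintro A ⟨hA, i, j, hij, hs⟩
    refine Set.mem_iUnion.2 ⟨⟨(i, j), ?_⟩, Submodule.subset_span hA, sub_eq_zero.2 hs⟩
    rw [MulAction.mem_orbit_symm, MulAction.mem_orbit_iff]
    rintro ⟨⟨σ, hσ⟩, h⟩
    exact hij ⟨σ, hσ, h⟩
  refine measure_mono_null hbad (measure_iUnion_null fun p => ?_)
  refine Measure.absolutelyContinuous_of_le Measure.restrict_le_self ?_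
  -- `matBorelSpace` is stated for the product topology on matrices, which agrees with the
  -- Frobenius-norm topology only up to unfolding, so instance search cannot supply it.
  exact @hausdorffMeasure_submodule_eq_zero _ _ _ _ matBorelSpace _ _ _
    (mod_cast Submodule.finrank_lt_finrank_of_lt (span_Vset_inf_ker_sVecDiff_lt G p.2))

/-- for any symmetry group `G`, the set of `A ∈ V(G)` for which `s(A)` fails
to be discriminative (two indices in different G-orbits share the same row sum) has
μ_G-measure zero; hence `s(A)` is discriminative for almost every `A ∈ 𝒜(G)`. -/
theorem stmt4 {n : ℕ} (G : Subgroup (Equiv.Perm (Fin n)))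
    (hsym : (AcalA G).Nonempty) :
    muG G {A | A ∈ Vset G ∧
      ∃ i j : Fin n, (¬ ∃ σ ∈ G, σ j = i) ∧ sVec A i = sVec A j} = 0 :=
  stmt4_general G
end
end

section
/- For every subgroup G ≤ Π_n there exists a symmetric matrix Ā ∈ V(G) such that for all indices i, j ∈ {1,…,n}: s_i(Ā) = s_j(Ā) if and only if i and j lie in the same G-orbit. (Explicitly, if I_1,…,I_k are the G-orbits one may take Ā_{ij} = r/|I_r| when i,j ∈ I_r and i,j lie in the same orbit, and Ā_{ij} = 0 when i,j lie in different orbits; then s_i(Ā) = r for all i ∈ I_r.) -/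
/- Setting: `pm n σ` is the permutation matrix of `σ` (entry (i,j) equals 1 iff σ j = i,
so it "sends j to σ j"). `Vset G` is the space V(G) of symmetric matrices invariant
under conjugation by all elements of `G`, and `sVec A = A·1` is the row-sum vector. -/

open Matrix Finset

noncomputable section

open Classical

/-- orbit relation: i and j in same G-orbit (some σ ∈ G sends j to i). -/
def Rrel {n : ℕ} (G : Subgroup (Equiv.Perm (Fin n))) (i j : Fin n) : Prop :=
  ∃ σ ∈ G, σ j = i

lemma Rrel_refl {n : ℕ} (G : Subgroup (Equiv.Perm (Fin n))) (i : Fin n) : Rrel G i i :=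
  ⟨1, G.one_mem, rfl⟩

lemma Rrel_symm {n : ℕ} {G : Subgroup (Equiv.Perm (Fin n))} {i j : Fin n}
    (h : Rrel G i j) : Rrel G j i := by
  obtain ⟨σ, hσ, e⟩ := h
  exact ⟨σ⁻¹, G.inv_mem hσ, by simp [← e]⟩

lemma Rrel_trans {n : ℕ} {G : Subgroup (Equiv.Perm (Fin n))} {i j k : Fin n}
    (h : Rrel G i j) (h' : Rrel G j k) : Rrel G i k := by
  obtain ⟨σ, hσ, e⟩ := h
  obtain ⟨τ, hτ, e'⟩ := h'
  exact ⟨σ * τ, G.mul_mem hσ hτ, by simp [Equiv.Perm.mul_apply, e', e]⟩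

def orbSet {n : ℕ} (G : Subgroup (Equiv.Perm (Fin n))) (i : Fin n) : Finset (Fin n) :=
  Finset.univ.filter (fun j => Rrel G j i)

lemma mem_orbSet {n : ℕ} (G : Subgroup (Equiv.Perm (Fin n))) (i j : Fin n) :
    j ∈ orbSet G i ↔ Rrel G j i := by simp [orbSet]

lemma self_mem_orbSet {n : ℕ} (G : Subgroup (Equiv.Perm (Fin n))) (i : Fin n) :
    i ∈ orbSet G i := (mem_orbSet G i i).2 (Rrel_refl G i)

lemma orbSet_eq {n : ℕ} {G : Subgroup (Equiv.Perm (Fin n))} {i j : Fin n}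
    (h : Rrel G i j) : orbSet G i = orbSet G j := by
  ext k
  simp only [mem_orbSet]
  exact ⟨fun hk => Rrel_trans hk h, fun hk => Rrel_trans hk (Rrel_symm h)⟩

/-- minimum of the orbit of i. -/
def mOrb {n : ℕ} (G : Subgroup (Equiv.Perm (Fin n))) (i : Fin n) : Fin n :=
  (orbSet G i).min' ⟨i, self_mem_orbSet G i⟩

lemma mOrb_mem {n : ℕ} (G : Subgroup (Equiv.Perm (Fin n))) (i : Fin n) :
    mOrb G i ∈ orbSet G i := Finset.min'_mem _ _

lemma mOrb_eq {n : ℕ} {G : Subgroup (Equiv.Perm (Fin n))} {i j : Fin n}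
    (h : Rrel G i j) : mOrb G i = mOrb G j := by
  unfold mOrb
  congr 1
  exact orbSet_eq h

def Abar {n : ℕ} (G : Subgroup (Equiv.Perm (Fin n))) : Matrix (Fin n) (Fin n) ℝ :=
  Matrix.of fun i j =>
    if Rrel G i j then ((mOrb G i : ℕ) : ℝ) / ((orbSet G i).card : ℝ) else 0

lemma Abar_apply_perm {n : ℕ} (G : Subgroup (Equiv.Perm (Fin n))) {σ : Equiv.Perm (Fin n)}
    (hσ : σ ∈ G) (i j : Fin n) : Abar G (σ i) (σ j) = Abar G i j := by
  have hRi : Rrel G (σ i) i := ⟨σ, hσ, rfl⟩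
  have hiff : Rrel G (σ i) (σ j) ↔ Rrel G i j := by
    constructor
    · intro h
      exact Rrel_trans (Rrel_trans (Rrel_symm hRi) h) ⟨σ, hσ, rfl⟩
    · intro h
      exact Rrel_trans (Rrel_trans hRi h) (Rrel_symm ⟨σ, hσ, rfl⟩)
  simp only [Abar, Matrix.of_apply, hiff, mOrb_eq hRi, orbSet_eq hRi]

/-- for every subgroup `G` of permutations there is a symmetric matrix
`Ā ∈ V(G)` such that `s_i(Ā) = s_j(Ā)` iff `i` and `j` lie in the same `G`-orbit
(i.e. some `σ ∈ G` sends `j` to `i`). -/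
theorem stmt5 {n : ℕ} (G : Subgroup (Equiv.Perm (Fin n))) :
    ∃ Abar ∈ Vset G, ∀ i j : Fin n,
      sVec Abar i = sVec Abar j ↔ ∃ σ ∈ G, σ j = i := by
  refine ⟨Abar G, ⟨?_, ?_⟩, ?_⟩
  · -- symmetric
    ext i j
    simp only [Matrix.transpose_apply, Abar, Matrix.of_apply]
    by_cases h : Rrel G i j
    · rw [if_pos (Rrel_symm h), if_pos h, mOrb_eq (Rrel_symm h), orbSet_eq (Rrel_symm h)]
    · rw [if_neg (fun hh => h (Rrel_symm hh)), if_neg h]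
  · -- invariance
    intro σ hσ
    ext i j
    have h1 : ((pm n σ)ᵀ * Abar G * pm n σ) i j = Abar G (σ i) (σ j) := by
      simp [Matrix.mul_apply, pm, Finset.sum_ite_eq', Finset.mul_sum, Finset.sum_mul,
        mul_ite, ite_mul]
    rw [h1, Abar_apply_perm G hσ]
  · -- row sums detect orbits
    have hs : ∀ i : Fin n, sVec (Abar G) i = ((mOrb G i : ℕ) : ℝ) := by
      intro i
      have hcard : ((orbSet G i).card : ℝ) ≠ 0 := by
        have : 0 < (orbSet G i).card := Finset.card_pos.2 ⟨i, self_mem_orbSet G i⟩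
        positivity
      have : sVec (Abar G) i =
          ∑ j : Fin n, if Rrel G i j then ((mOrb G i : ℕ) : ℝ) / ((orbSet G i).card : ℝ) else 0 := by
        simp [sVec, Matrix.mulVec, dotProduct, Abar]
      rw [this, ← Finset.sum_filter]
      have hfilt : Finset.univ.filter (fun j => Rrel G i j) = orbSet G i := by
        ext k
        simp only [Finset.mem_filter, Finset.mem_univ, true_and, mem_orbSet]
        exact ⟨Rrel_symm, Rrel_symm⟩
      rw [hfilt, Finset.sum_const, nsmul_eq_mul]
      field_simp
    intro i j
    rw [hs i, hs j]
    constructor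
    · intro h
      have hm : mOrb G i = mOrb G j := by exact_mod_cast Fin.val_injective (by exact_mod_cast h)
      have h1 : Rrel G (mOrb G i) i := (mem_orbSet G i _).1 (mOrb_mem G i)
      have h2 : Rrel G (mOrb G j) j := (mem_orbSet G j _).1 (mOrb_mem G j)
      exact Rrel_trans (Rrel_symm (hm ▸ h1)) h2
    · intro h
      rw [mOrb_eq (Rrel_symm h)]
end
end

section
/- Let s ∈ ℝ^n and let S = Σ_{k=1}^m θ_k P(k) be a convex combination of n×n permutation matrices P(1),…,P(m) with coefficients θ_k > 0 summing to 1. If Ss = s, then P(k)s = s for every k = 1,…,m. -/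
/- `pm n σ` is the permutation matrix of `σ` (entry (i,j) equals 1 iff σ j = i). -/

open Matrix Finset

noncomputable section

lemma pm_mulVec {n : ℕ} (σ : Equiv.Perm (Fin n)) (s : Fin n → ℝ) :
    pm n σ *ᵥ s = fun i => s (σ.symm i) := by
  funext i
  simp only [pm, Matrix.mulVec, dotProduct, Matrix.of_apply]
  have : ∀ j, (if σ j = i then (1 : ℝ) else 0) * s j
      = if j = σ.symm i then s j else 0 := by
    intro j
    rcases eq_or_ne j (σ.symm i) with h | h
    · simp [h]
    · have h2 : σ j ≠ i := fun hj => h (by simp [← hj])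
      simp [h, h2]
  simp [this]

lemma perm_sum_sq {n : ℕ} (σ : Equiv.Perm (Fin n)) (s : Fin n → ℝ) :
    ∑ i, s (σ.symm i) ^ 2 = ∑ i, s i ^ 2 :=
  Equiv.sum_comp σ.symm (fun i => s i ^ 2)

/-- if `S = Σ_k θ_k P(k)` is a convex combination of permutation matrices
with strictly positive coefficients and `S s = s`, then `P(k) s = s` for every `k`. -/
theorem stmt6 {n m : ℕ} (s : Fin n → ℝ) (θ : Fin m → ℝ)
    (P : Fin m → Matrix (Fin n) (Fin n) ℝ)
    (hθpos : ∀ k, 0 < θ k) (hθsum : ∑ k, θ k = 1)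
    (hP : ∀ k, IsPermMatrix (P k))
    (S : Matrix (Fin n) (Fin n) ℝ) (hS : S = ∑ k, θ k • P k)
    (hfix : S *ᵥ s = s) :
    ∀ k, (P k) *ᵥ s = s := by
  -- key facts
  have hnorm : ∀ k, ∑ i, ((P k *ᵥ s) i) ^ 2 = ∑ i, s i ^ 2 := by
    intro k
    obtain ⟨σ, hσ⟩ := hP k
    rw [hσ, pm_mulVec]
    exact perm_sum_sq σ s
  have hSvec : ∀ i, (∑ k, θ k * (P k *ᵥ s) i) = s i := by
    intro i
    have := congrFun hfix i
    rw [hS] at this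
    rw [← this]
    simp only [Matrix.mulVec, dotProduct, Matrix.sum_apply, Matrix.smul_apply,
      smul_eq_mul, Finset.sum_mul, Finset.mul_sum]
    rw [Finset.sum_comm]
    simp_rw [mul_assoc]
  -- total sum of squared deviations is zero
  have key : ∑ k, θ k * (∑ i, ((P k *ᵥ s) i - s i) ^ 2) = 0 := by
    have expand : ∀ k, (∑ i, ((P k *ᵥ s) i - s i) ^ 2)
        = 2 * ∑ i, s i ^ 2 - 2 * ∑ i, (P k *ᵥ s) i * s i := by
      intro k
      have : ∑ i, ((P k *ᵥ s) i - s i) ^ 2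
          = ∑ i, ((P k *ᵥ s) i ^ 2 + s i ^ 2 - 2 * ((P k *ᵥ s) i * s i)) := by
        congr 1; funext i; ring
      rw [this, Finset.sum_sub_distrib, Finset.sum_add_distrib, hnorm k, ← Finset.mul_sum]
      ring
    calc ∑ k, θ k * (∑ i, ((P k *ᵥ s) i - s i) ^ 2)
        = ∑ k, (θ k * (2 * ∑ i, s i ^ 2) - 2 * ∑ i, θ k * ((P k *ᵥ s) i * s i)) := by
          congr 1; funext k
          rw [expand k, ← Finset.mul_sum]
          ring
      _ = (∑ k, θ k) * (2 * ∑ i, s i ^ 2) - 2 * ∑ i, (∑ k, θ k * (P k *ᵥ s) i) * s i := by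
          rw [Finset.sum_sub_distrib, ← Finset.sum_mul, ← Finset.mul_sum, Finset.sum_comm]
          simp_rw [Finset.sum_mul, mul_assoc]
      _ = 0 := by
          rw [hθsum]
          have : ∑ i, (∑ k, θ k * (P k *ᵥ s) i) * s i = ∑ i, s i ^ 2 := by
            congr 1; funext i; rw [hSvec i]; ring
          rw [this]; ring
  -- each term nonneg, so each is zero
  have hzero : ∀ k, θ k * (∑ i, ((P k *ᵥ s) i - s i) ^ 2) = 0 := by
    have hnn : ∀ k ∈ Finset.univ, 0 ≤ θ k * (∑ i, ((P k *ᵥ s) i - s i) ^ 2) := by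
      intro k _
      exact mul_nonneg (hθpos k).le (Finset.sum_nonneg fun i _ => sq_nonneg _)
    intro k
    exact (Finset.sum_eq_zero_iff_of_nonneg hnn).mp key k (Finset.mem_univ k)
  intro k
  have hsum0 : ∑ i, ((P k *ᵥ s) i - s i) ^ 2 = 0 := by
    have := hzero k
    rcases mul_eq_zero.mp this with h | h
    · exact absurd h (hθpos k).ne'
    · exact h
  funext i
  have := (Finset.sum_eq_zero_iff_of_nonneg (fun i _ => sq_nonneg _)).mp hsum0 i (Finset.mem_univ i)
  have := pow_eq_zero_iff (n := 2) (by norm_num) |>.mp this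
  linarith [this]
end
end

section
/- Let A ∈ ℝ^{n×n} be a symmetric matrix, let I_1,…,I_k be the orbits of the action of Aut(A) on {1,…,n}, let n_j = |I_j|, and for 1 ≤ i,j ≤ k let A_{ij} denote the submatrix of A with rows indexed by I_i and columns indexed by I_j. Suppose there exists r, 1 ≤ r ≤ k, such that: (1) the vector s(A) = A·1 is discriminative, i.e., s_i(A) ≠ s_j(A) whenever i and j lie in different orbits of Aut(A); (2) rank(A_{rj}) = n_j for all j ≠ r; and (3) the symmetric matrix A_{rr} has simple spectrum (n_r distinct eigenvalues). Then DS(A) is convex exact: Aut_conv(A) = conv(Aut(A)). -/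
/- Setting: graphs are symmetric real n×n matrices. `pm n σ` is the permutation
matrix of `σ` (entry (i,j) equals 1 iff σ j = i, so it "sends j to σ j").
`DS n` is the set of doubly stochastic matrices, `Aut A` the set of permutation
matrices commuting with `A`, and `AutConv A` its doubly stochastic relaxation. -/

open Matrix MeasureTheory Finset

noncomputable section

/-- `O` is an orbit of the action of `Aut A` on the indices. -/
def IsAutOrbit {n : ℕ} (A : Matrix (Fin n) (Fin n) ℝ) (O : Finset (Fin n)) : Prop :=
  ∃ i, ∀ j, j ∈ O ↔ SameAutOrbit A i j

/-- A real square matrix has simple spectrum: its characteristic polynomial has as many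
distinct real roots as the size of the matrix (all eigenvalues real and distinct). -/
def SimpleSpectrum {m : Type*} [Fintype m] [DecidableEq m] (M : Matrix m m ℝ) : Prop :=
  M.charpoly.roots.toFinset.card = Fintype.card m

/-! A doubly stochastic `S` commuting with `A` fixes `s(A) = A·1`, and then
`∑ᵢⱼ Sᵢⱼ (sᵢ - sⱼ)² = 0`; as `s(A)` is discriminative, `S` vanishes between different orbits.
On the orbit `I_r`, the block `S_rr` commutes with `A_rr`. Since `A_rr` has simple spectrum,
everything commuting with it is diagonal in one eigenbasis, so its commutant has dimension at
most `n_r`. Restricting automorphisms `g_x` with `g_x x = a` (for a base point `a`) gives `n_r`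
linearly independent elements of that commutant; hence `S_rr = ∑ₓ cₓ (g_x)_rr` with
`cₓ = S_{a x}`, a convex combination. The matrix `S' = ∑ₓ cₓ g_x` agrees with `S` on
`I_r × I_r`, and for another orbit `I_j` the identity
`A_rj (S - S')_jj = (A (S - S'))_rj = ((S - S') A)_rj = 0` together with the full column rank
of `A_rj` gives `S = S'`. -/

theorem eq_of_mulVec_eq_self_of_mem_doublyStochastic {ι : Type*} [Fintype ι] [DecidableEq ι]
    {S : Matrix ι ι ℝ} (hS : S ∈ doublyStochastic ℝ ι) {s : ι → ℝ} (hs : S *ᵥ s = s)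
    {i j : ι} (hij : S i j ≠ 0) : s i = s j := by
  have hfix : ∀ i, ∑ j, S i j * s j = s i := fun i => congr_fun hs i
  have hrow : ∀ i, ∑ j, S i j * (s i - s j) ^ 2 = ∑ j, S i j * s j ^ 2 - s i ^ 2 := fun i =>
    calc ∑ j, S i j * (s i - s j) ^ 2
        = ∑ j, (s i ^ 2 * S i j - 2 * s i * (S i j * s j) + S i j * s j ^ 2) :=
          sum_congr rfl fun j _ => by ring
      _ = s i ^ 2 * ∑ j, S i j - 2 * s i * ∑ j, S i j * s j + ∑ j, S i j * s j ^ 2 := by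
          rw [sum_add_distrib, sum_sub_distrib, mul_sum, mul_sum]
      _ = ∑ j, S i j * s j ^ 2 - s i ^ 2 := by
          rw [sum_row_of_mem_doublyStochastic hS, hfix]; ring
  have htotal : ∑ i, ∑ j, S i j * (s i - s j) ^ 2 = 0 := by
    simp only [hrow, sum_sub_distrib]
    rw [sum_comm]
    simp [← sum_mul, sum_col_of_mem_doublyStochastic hS]
  have hterm_nonneg : ∀ i j, 0 ≤ S i j * (s i - s j) ^ 2 := fun i j =>
    mul_nonneg (nonneg_of_mem_doublyStochastic hS) (sq_nonneg _)
  rw [Fintype.sum_eq_zero_iff_of_nonneg fun i => sum_nonneg fun j _ => hterm_nonneg i j] at htotal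
  have hrow0 := congr_fun htotal i
  rw [Pi.zero_apply, Fintype.sum_eq_zero_iff_of_nonneg (hterm_nonneg i)] at hrow0
  simpa only [Pi.zero_apply, mul_eq_zero, hij, false_or, pow_eq_zero_iff two_ne_zero,
    sub_eq_zero] using congr_fun hrow0 j

theorem Matrix.mulVec_injective_of_rank_eq_card {l m K : Type*} [Fintype l] [Fintype m] [Field K]
    {C : Matrix m l K} (h : C.rank = Fintype.card l) : Function.Injective C.mulVec := by
  have hrn := LinearMap.finrank_range_add_finrank_ker C.mulVecLin
  rw [Module.finrank_fintype_fun_eq_card, ← Matrix.rank, h, add_eq_left,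
    Submodule.finrank_eq_zero, LinearMap.ker_eq_bot] at hrn
  exact hrn

theorem Matrix.mul_apply_eq_sum_subtype {ι R : Type*} [Fintype ι] [NonUnitalNonAssocSemiring R]
    {M N : Matrix ι ι R} (O : Finset ι) {i j : ι} (h : ∀ k ∉ O, M i k * N k j = 0) :
    (M * N) i j = ∑ k : O, M i k * N k j := by
  rw [mul_apply, sum_coe_sort O fun k => M i k * N k j,
    sum_subset (subset_univ O) fun k _ hk => h k hk]

theorem Matrix.submatrix_mul_of_forall_notMem {ι R : Type*} [Fintype ι]
    [NonUnitalNonAssocSemiring R] {M N : Matrix ι ι R} (O : Finset ι)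
    (h : ∀ i ∈ O, ∀ j ∈ O, ∀ k ∉ O, M i k * N k j = 0) :
    (M * N).submatrix ((↑) : O → ι) ((↑) : O → ι) =
      M.submatrix (↑) ((↑) : O → ι) * N.submatrix ((↑) : O → ι) (↑) := by
  ext i j
  exact mul_apply_eq_sum_subtype O (h i i.2 j j.2)

theorem Module.Basis.eq_repr_smul_of_apply_eq_smul {K V ι : Type*} [Field K] [AddCommGroup V]
    [Module K V] [Fintype ι] [DecidableEq ι] (b : Module.Basis ι K V) {f : Module.End K V}
    {μ : ι → K} (hμ : Function.Injective μ) (hb : ∀ i, f (b i) = μ i • b i) {w : V} {k : ι}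
    (hw : f w = μ k • w) : w = b.repr w k • b k := by
  have hcoord : ∀ l, (b.coord l).comp f = μ l • b.coord l := fun l => b.ext fun i => by
    by_cases hil : i = l
    · subst hil; simp [hb]
    · simp [hb, hil]
  have hzero : ∀ l ≠ k, b.repr w l = 0 := by
    intro l hl
    have h := LinearMap.congr_fun (hcoord l) w
    simp only [LinearMap.comp_apply, hw, map_smul, Module.Basis.coord_apply, smul_eq_mul,
      LinearMap.smul_apply] at h
    exact (mul_eq_mul_right_iff.mp h).resolve_left fun h' => hl (hμ h').symm
  conv_lhs => rw [← b.sum_repr w]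
  exact Fintype.sum_eq_single k fun l hl => by rw [hzero l hl, zero_smul]

theorem Subalgebra.mem_centralizer_singleton_iff (R : Type*) {S : Type*} [CommSemiring R]
    [Semiring S] [Algebra R S] {a b : S} : b ∈ Subalgebra.centralizer R {a} ↔ Commute a b := by
  simp [Subalgebra.mem_centralizer_iff, Commute, SemiconjBy]

section SimpleSpectrum

variable {m : Type*} [Fintype m] [DecidableEq m] {B : Matrix m m ℝ}

lemma SimpleSpectrum.exists_eigenbasis (h : SimpleSpectrum B) :
    ∃ b : Module.Basis B.charpoly.roots.toFinset ℝ (m → ℝ), ∀ μ, B *ᵥ b μ = (μ : ℝ) • b μ := by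
  have hvec : ∀ μ : B.charpoly.roots.toFinset, ∃ v, Module.End.HasEigenvector (toLin' B) μ v := by
    intro μ
    refine ((Module.End.hasEigenvalue_iff_isRoot_charpoly _ _).mpr ?_).exists_hasEigenvector
    rw [charpoly_toLin']
    exact (Polynomial.mem_roots B.charpoly_monic.ne_zero).mp (Multiset.mem_toFinset.mp μ.2)
  choose v hv using hvec
  have hind : LinearIndependent ℝ v :=
    Module.End.eigenvectors_linearIndependent' _ _ Subtype.val_injective v hv
  have hcard : Fintype.card B.charpoly.roots.toFinset = Module.finrank ℝ (m → ℝ) := by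
    rw [Fintype.card_coe, Module.finrank_fintype_fun_eq_card]
    exact h
  refine ⟨basisOfLinearIndependentOfCardEqFinrank' v hind hcard, fun μ => ?_⟩
  rw [coe_basisOfLinearIndependentOfCardEqFinrank', ← toLin'_apply]
  exact (hv μ).apply_eq_smul

lemma SimpleSpectrum.finrank_centralizer_le (h : SimpleSpectrum B) :
    Module.finrank ℝ (Subalgebra.centralizer ℝ {B}).toSubmodule ≤ Fintype.card m := by
  obtain ⟨b, hb⟩ := h.exists_eigenbasis
  have hdiag : ∀ M ∈ (Subalgebra.centralizer ℝ {B}).toSubmodule, ∀ μ,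
      M *ᵥ b μ = b.repr (M *ᵥ b μ) μ • b μ := by
    intro M hM μ
    refine b.eq_repr_smul_of_apply_eq_smul (f := toLin' B) Subtype.val_injective
      (fun μ => by rw [toLin'_apply, hb]) ?_
    rw [toLin'_apply, mulVec_mulVec, ((Subalgebra.mem_centralizer_singleton_iff ℝ).mp hM).eq,
      ← mulVec_mulVec, hb, mulVec_smul]
  let diagCoeff :
      (Subalgebra.centralizer ℝ {B}).toSubmodule →ₗ[ℝ] (B.charpoly.roots.toFinset → ℝ) :=
    { toFun := fun M μ => b.repr ((M : Matrix m m ℝ) *ᵥ b μ) μ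
      map_add' := fun M N => by ext; simp [add_mulVec]
      map_smul' := fun c M => by ext; simp [smul_mulVec] }
  have hinj : Function.Injective diagCoeff := by
    refine (injective_iff_map_eq_zero _).mpr fun M hM => Subtype.ext ?_
    refine toLin'.injective (b.ext fun μ => ?_)
    rw [toLin'_apply, hdiag M M.2, show b.repr _ μ = 0 from congr_fun hM μ, zero_smul]
    simp
  calc Module.finrank ℝ (Subalgebra.centralizer ℝ {B}).toSubmodule
      ≤ Module.finrank ℝ (B.charpoly.roots.toFinset → ℝ) :=
        LinearMap.finrank_le_finrank_of_injective hinj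
    _ = Fintype.card m := by rw [Module.finrank_fintype_fun_eq_card, Fintype.card_coe]; exact h

lemma SimpleSpectrum.exists_sum_smul_eq (h : SimpleSpectrum B) {P : m → Matrix m m ℝ}
    (hP : LinearIndependent ℝ P) (hPB : ∀ x, Commute B (P x)) {T : Matrix m m ℝ}
    (hT : Commute B T) : ∃ c : m → ℝ, ∑ x, c x • P x = T := by
  have hle : Submodule.span ℝ (Set.range P) ≤ (Subalgebra.centralizer ℝ {B}).toSubmodule :=
    Submodule.span_le.mpr <| Set.range_subset_iff.mpr fun x =>
      (Subalgebra.mem_centralizer_singleton_iff ℝ).mpr (hPB x)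
  have heq := Submodule.eq_of_le_of_finrank_le hle
    (by rw [finrank_span_eq_card hP]; exact h.finrank_centralizer_le)
  rw [← Submodule.mem_span_range_iff_exists_fun, heq]
  exact (Subalgebra.mem_centralizer_singleton_iff ℝ).mpr hT

end SimpleSpectrum

section Automorphisms

variable {n : ℕ} {A : Matrix (Fin n) (Fin n) ℝ}

lemma pm_eq_permMatrix (σ : Equiv.Perm (Fin n)) : pm n σ = σ⁻¹.permMatrix ℝ := by
  ext i j
  simp only [pm, of_apply, Equiv.Perm.permMatrix, PEquiv.toMatrix_apply, Equiv.toPEquiv_apply,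
    Option.mem_def, Option.some_inj]
  exact if_congr (by rw [Equiv.Perm.inv_eq_iff_eq, eq_comm]) rfl rfl

lemma pm_mul (σ : Equiv.Perm (Fin n)) (M : Matrix (Fin n) (Fin n) ℝ) :
    pm n σ * M = M.submatrix ⇑(σ⁻¹) id := by
  rw [pm_eq_permMatrix, Equiv.Perm.permMatrix, PEquiv.toMatrix_toPEquiv_mul]

lemma mul_pm (σ : Equiv.Perm (Fin n)) (M : Matrix (Fin n) (Fin n) ℝ) :
    M * pm n σ = M.submatrix id σ := by
  rw [pm_eq_permMatrix, Equiv.Perm.permMatrix, PEquiv.mul_toMatrix_toPEquiv]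
  rfl

variable (n) in
lemma DS_eq_doublyStochastic : DS n = doublyStochastic ℝ (Fin n) := by
  ext S
  rw [SetLike.mem_coe, mem_doublyStochastic_iff_sum]
  rfl

lemma pm_mem_DS (σ : Equiv.Perm (Fin n)) : pm n σ ∈ DS n := by
  rw [DS_eq_doublyStochastic, pm_eq_permMatrix]
  exact permMatrix_mem_doublyStochastic

variable (A) in
def autPerm : Subgroup (Equiv.Perm (Fin n)) where
  carrier := {σ | ∀ i j, A (σ i) (σ j) = A i j}
  mul_mem' {σ τ} hσ hτ i j := (hσ (τ i) (τ j)).trans (hτ i j)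
  one_mem' _ _ := rfl
  inv_mem' {σ} hσ i j := by simpa using (hσ (σ⁻¹ i) (σ⁻¹ j)).symm

lemma pm_mem_Aut_iff {σ : Equiv.Perm (Fin n)} : pm n σ ∈ Aut A ↔ σ ∈ autPerm A := by
  refine ⟨fun h i j => ?_, fun h => ⟨⟨σ, rfl⟩, ?_⟩⟩
  · simpa [mul_pm, pm_mul] using congr_fun₂ h.2 (σ i) j
  · ext i j
    simpa [mul_pm, pm_mul] using h (σ⁻¹ i) j

lemma sameAutOrbit_iff {i j : Fin n} : SameAutOrbit A i j ↔ ∃ σ ∈ autPerm A, σ j = i := by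
  refine ⟨?_, fun ⟨σ, hσ, hσj⟩ => ⟨pm n σ, pm_mem_Aut_iff.mpr hσ, by simp [pm, hσj]⟩⟩
  rintro ⟨P, hP, hPij⟩
  obtain ⟨σ, rfl⟩ := hP.1
  refine ⟨σ, pm_mem_Aut_iff.mp hP, ?_⟩
  by_contra h
  simp [pm, h] at hPij

lemma sameAutOrbit_equivalence : Equivalence (SameAutOrbit A) := by
  convert (MulAction.orbitRel (autPerm A) (Fin n)).iseqv using 1
  funext i j
  rw [sameAutOrbit_iff, MulAction.orbitRel_apply, MulAction.mem_orbit_iff]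
  simp [Subgroup.smul_def]

lemma IsAutOrbit.mem_iff {O : Finset (Fin n)} (hO : IsAutOrbit A O) {i j : Fin n} (hi : i ∈ O) :
    j ∈ O ↔ SameAutOrbit A i j := by
  obtain ⟨a, ha⟩ := hO
  have hai := (ha i).mp hi
  rw [ha j]
  exact ⟨sameAutOrbit_equivalence.trans (sameAutOrbit_equivalence.symm hai),
    sameAutOrbit_equivalence.trans hai⟩

lemma isAutOrbit_filter (i : Fin n) [DecidablePred (SameAutOrbit A i)] :
    IsAutOrbit A (univ.filter (SameAutOrbit A i)) :=
  ⟨i, fun j => by simp⟩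

variable (A) in
lemma convex_AutConv : Convex ℝ (AutConv A) := by
  refine (DS_eq_doublyStochastic n ▸ convex_doublyStochastic).inter ?_
  intro S (hS : A * S = S * A) T (hT : A * T = T * A) a b _ _ _
  change A * (a • S + b • T) = (a • S + b • T) * A
  simp only [Matrix.mul_add, Matrix.add_mul, Matrix.mul_smul, Matrix.smul_mul, hS, hT]

variable (A) in
lemma convexHull_Aut_subset_AutConv :
    convexHull ℝ (Aut A) ⊆ AutConv A := by
  refine convexHull_min ?_ (convex_AutConv A)
  rintro P ⟨⟨σ, rfl⟩, hcomm⟩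
  exact ⟨pm_mem_DS σ, hcomm⟩

variable (A) in
def IsAutBlockDiagonal (M : Matrix (Fin n) (Fin n) ℝ) : Prop :=
  ∀ i j, M i j ≠ 0 → SameAutOrbit A i j

lemma IsAutBlockDiagonal.apply_eq_zero {M : Matrix (Fin n) (Fin n) ℝ}
    (hM : IsAutBlockDiagonal A M) {i j : Fin n} (h : ¬ SameAutOrbit A i j) : M i j = 0 :=
  not_not.mp (mt (hM i j) h)

lemma IsAutBlockDiagonal.apply_eq_zero_of_mem_of_notMem {M : Matrix (Fin n) (Fin n) ℝ}
    (hM : IsAutBlockDiagonal A M) {O : Finset (Fin n)} (hO : IsAutOrbit A O) {i k : Fin n}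
    (hi : i ∈ O) (hk : k ∉ O) : M i k = 0 ∧ M k i = 0 := by
  rw [hO.mem_iff hi] at hk
  exact ⟨hM.apply_eq_zero hk, hM.apply_eq_zero (mt sameAutOrbit_equivalence.symm hk)⟩

lemma IsAutBlockDiagonal.sub {M N : Matrix (Fin n) (Fin n) ℝ} (hM : IsAutBlockDiagonal A M)
    (hN : IsAutBlockDiagonal A N) : IsAutBlockDiagonal A (M - N) := by
  intro i j hij
  by_contra h
  simp [hM.apply_eq_zero h, hN.apply_eq_zero h] at hij

lemma isAutBlockDiagonal_of_mem_Aut {P : Matrix (Fin n) (Fin n) ℝ} (hP : P ∈ Aut A) :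
    IsAutBlockDiagonal A P := by
  obtain ⟨σ, rfl⟩ := hP.1
  intro i j hij
  exact ⟨pm n σ, hP, by simpa [pm] using hij⟩

lemma isAutBlockDiagonal_of_mem_AutConv
    (hdisc : ∀ i j, ¬ SameAutOrbit A i j → sVec A i ≠ sVec A j) {S : Matrix (Fin n) (Fin n) ℝ}
    (hS : S ∈ AutConv A) : IsAutBlockDiagonal A S := by
  obtain ⟨hDS, hcomm⟩ := hS
  rw [DS_eq_doublyStochastic] at hDS
  have hfix : S *ᵥ sVec A = sVec A := by
    rw [sVec, mulVec_mulVec, ← hcomm, ← mulVec_mulVec, mulVec_one_of_mem_doublyStochastic hDS]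
  intro i j hij
  by_contra h
  exact hdisc i j h (eq_of_mulVec_eq_self_of_mem_doublyStochastic hDS hfix hij)

lemma IsAutBlockDiagonal.commute_submatrix {M : Matrix (Fin n) (Fin n) ℝ}
    (hM : IsAutBlockDiagonal A M) {O : Finset (Fin n)} (hO : IsAutOrbit A O) (hAM : Commute A M) :
    Commute (A.submatrix ((↑) : O → Fin n) ((↑) : O → Fin n))
      (M.submatrix ((↑) : O → Fin n) ((↑) : O → Fin n)) := by
  unfold Commute SemiconjBy
  rw [← submatrix_mul_of_forall_notMem O fun i hi j hj k hk => by
      rw [(hM.apply_eq_zero_of_mem_of_notMem hO hj hk).2, mul_zero],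
    ← submatrix_mul_of_forall_notMem O fun i hi j hj k hk => by
      rw [(hM.apply_eq_zero_of_mem_of_notMem hO hi hk).1, zero_mul],
    hAM.eq]

lemma IsAutBlockDiagonal.eq_zero_of_submatrix_eq_zero {D : Matrix (Fin n) (Fin n) ℝ}
    (hD : IsAutBlockDiagonal A D) (hAD : Commute A D) {O : Finset (Fin n)} (hO : IsAutOrbit A O)
    (hrank : ∀ Oj : Finset (Fin n), IsAutOrbit A Oj → Oj ≠ O →
      (A.submatrix (fun x : O => (x : Fin n)) (fun y : Oj => (y : Fin n))).rank = Oj.card)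
    (hDO : D.submatrix ((↑) : O → Fin n) ((↑) : O → Fin n) = 0) : D = 0 := by
  classical
  ext u v
  by_cases hv : v ∈ O
  · by_cases hu : u ∈ O
    · exact congr_fun₂ hDO ⟨u, hu⟩ ⟨v, hv⟩
    · exact (hD.apply_eq_zero_of_mem_of_notMem hO hv hu).2
  set Ov := univ.filter (SameAutOrbit A v)
  have hOv : IsAutOrbit A Ov := isAutOrbit_filter v
  have hvOv : v ∈ Ov := by simp [Ov, sameAutOrbit_equivalence.refl v]
  by_cases hu : u ∉ Ov
  · exact (hD.apply_eq_zero_of_mem_of_notMem hOv hvOv hu).2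
  have hcol : A.submatrix ((↑) : O → Fin n) ((↑) : Ov → Fin n) *ᵥ (fun k => D k v) = 0 := by
    funext w
    calc (A.submatrix ((↑) : O → Fin n) ((↑) : Ov → Fin n) *ᵥ fun k => D k v) w = (A * D) w v :=
          (mul_apply_eq_sum_subtype Ov fun k hk => by
            rw [(hD.apply_eq_zero_of_mem_of_notMem hOv hvOv hk).2, mul_zero]).symm
      _ = (D * A) w v := by rw [hAD.eq]
      _ = 0 := by
          rw [mul_apply_eq_sum_subtype O fun k hk => by
            rw [(hD.apply_eq_zero_of_mem_of_notMem hO w.2 hk).1, zero_mul]]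
          exact sum_eq_zero fun k _ => by rw [show D w k = 0 from congr_fun₂ hDO w k, zero_mul]
  have hinj := mulVec_injective_of_rank_eq_card
    ((hrank Ov hOv (ne_of_mem_of_not_mem' hvOv hv)).trans (Fintype.card_coe Ov).symm)
  exact congr_fun (hinj (hcol.trans (mulVec_zero _).symm)) ⟨u, not_not.mp hu⟩

lemma sum_mul_pm_apply_of_apply_eq {O : Finset (Fin n)} {a : Fin n}
    {g : O → Equiv.Perm (Fin n)} (hg : ∀ x, g x x = a) (c : O → ℝ) (y : O) :
    ∑ x, c x * pm n (g x) a y = c y := by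
  have hiff : ∀ x : O, g x y = a ↔ x = y := fun x => by
    rw [← hg x, (g x).injective.eq_iff, eq_comm, Subtype.ext_iff]
  simp [pm, hiff]

lemma exists_submatrix_eq_sum_smul_pm {O : Finset (Fin n)} (hO : IsAutOrbit A O)
    (hsimple : SimpleSpectrum (A.submatrix (fun x : O => (x : Fin n)) (fun y : O => (y : Fin n))))
    {S : Matrix (Fin n) (Fin n) ℝ} (hS : S ∈ AutConv A) (hSblock : IsAutBlockDiagonal A S) :
    ∃ (c : O → ℝ) (g : O → Equiv.Perm (Fin n)), (∀ x, g x ∈ autPerm A) ∧ (∀ x, 0 ≤ c x) ∧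
      ∑ x, c x = 1 ∧ S.submatrix ((↑) : O → Fin n) ((↑) : O → Fin n) =
        (∑ x, c x • pm n (g x)).submatrix ((↑) : O → Fin n) ((↑) : O → Fin n) := by
  obtain ⟨a, ha⟩ := id hO
  have haO : a ∈ O := (ha a).mpr (sameAutOrbit_equivalence.refl a)
  choose g hgA hga using fun x : O => sameAutOrbit_iff.mp ((ha x).mp x.2)
  set P := fun x => (pm n (g x)).submatrix ((↑) : O → Fin n) ((↑) : O → Fin n)
  have hrow : ∀ (c : O → ℝ) y, (∑ x, c x • P x) ⟨a, haO⟩ y = c y := fun c y => by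
    simp only [P, Matrix.sum_apply, Matrix.smul_apply, submatrix_apply, smul_eq_mul,
      sum_mul_pm_apply_of_apply_eq hga]
  have hP : LinearIndependent ℝ P := Fintype.linearIndependent_iff.mpr fun c hc y =>
    (hrow c y).symm.trans (congr_fun₂ hc ⟨a, haO⟩ y)
  have hPA : ∀ x, Commute (A.submatrix ((↑) : O → Fin n) ((↑) : O → Fin n)) (P x) := fun x =>
    (isAutBlockDiagonal_of_mem_Aut (pm_mem_Aut_iff.mpr (hgA x))).commute_submatrix hO
      (pm_mem_Aut_iff.mpr (hgA x)).2
  obtain ⟨c, hc⟩ := hsimple.exists_sum_smul_eq hP hPA (hSblock.commute_submatrix hO hS.2)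
  have hcS : ∀ y, c y = S a y := fun y => (hrow c y).symm.trans (congr_fun₂ hc ⟨a, haO⟩ y)
  refine ⟨c, g, hgA, fun y => hcS y ▸ hS.1.1 a y, ?_, ?_⟩
  · rw [sum_congr rfl fun y _ => hcS y, sum_coe_sort O (S a),
      sum_subset (subset_univ O) fun k _ hk => (hSblock.apply_eq_zero_of_mem_of_notMem hO haO hk).1]
    exact hS.1.2.1 a
  · rw [← hc]
    ext
    simp [P, Matrix.sum_apply]

end Automorphisms

theorem stmt7_general {n : ℕ} (A : Matrix (Fin n) (Fin n) ℝ)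
    (Or : Finset (Fin n)) (hOr : IsAutOrbit A Or)
    (hdisc : ∀ i j, ¬ SameAutOrbit A i j → sVec A i ≠ sVec A j)
    (hrank : ∀ Oj : Finset (Fin n), IsAutOrbit A Oj → Oj ≠ Or →
      (A.submatrix (fun x : Or => (x : Fin n)) (fun y : Oj => (y : Fin n))).rank = Oj.card)
    (hsimple : SimpleSpectrum
      (A.submatrix (fun x : Or => (x : Fin n)) (fun y : Or => (y : Fin n)))) :
    ConvexExact A := by
  refine Set.Subset.antisymm (fun S hS => ?_) (convexHull_Aut_subset_AutConv A)
  have hblock := fun {M} (hM : M ∈ AutConv A) => isAutBlockDiagonal_of_mem_AutConv hdisc hM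
  obtain ⟨c, g, hg, hc0, hc1, hSO⟩ := exists_submatrix_eq_sum_smul_pm hOr hsimple hS (hblock hS)
  have hhull : ∑ x, c x • pm n (g x) ∈ convexHull ℝ (Aut A) :=
    (convex_convexHull ℝ _).sum_mem (fun x _ => hc0 x) hc1 fun x _ =>
      subset_convexHull ℝ _ (pm_mem_Aut_iff.mpr (hg x))
  have hS' := convexHull_Aut_subset_AutConv A hhull
  have hdiff := ((hblock hS).sub (hblock hS')).eq_zero_of_submatrix_eq_zero
    (Commute.sub_right hS.2 hS'.2) hOr hrank (sub_eq_zero.mpr hSO)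
  rwa [sub_eq_zero.mp hdiff]

/-- let `A` be symmetric. If there is an orbit `Or` of `Aut A` such that
(1) `s(A)` is discriminative, (2) for every other orbit `Oj` the submatrix `A_{rj}` has
full rank `|Oj|`, and (3) the submatrix `A_{rr}` has simple spectrum, then `DS(A)` is
convex exact. -/
theorem stmt7 {n : ℕ} (A : Matrix (Fin n) (Fin n) ℝ) (hA : A.IsSymm)
    (Or : Finset (Fin n)) (hOr : IsAutOrbit A Or)
    (hdisc : ∀ i j, ¬ SameAutOrbit A i j → sVec A i ≠ sVec A j)
    (hrank : ∀ Oj : Finset (Fin n), IsAutOrbit A Oj → Oj ≠ Or →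
      (A.submatrix (fun x : Or => (x : Fin n)) (fun y : Oj => (y : Fin n))).rank = Oj.card)
    (hsimple : SimpleSpectrum
      (A.submatrix (fun x : Or => (x : Fin n)) (fun y : Or => (y : Fin n)))) :
    ConvexExact A :=
  stmt7_general A Or hOr hdisc hrank hsimple
end
end

section
/- Let A₀ be the symmetric matrix A₀ = [[6,1,2],[1,5,3],[2,3,4]] ∈ ℝ^{3×3}. Then: (i) A₀ is asymmetric, i.e., Aut(A₀) = {I₃}; (ii) A₀·1 = 9·1, where 1 is the all-ones vector; (iii) the matrix J/3 with all entries equal to 1/3 satisfies J/3 ∈ Aut_conv(A₀). Consequently Aut_conv(A₀) ≠ conv(Aut(A₀)), so DS(A₀) is not exact (and not weakly exact). -/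
/-! The only permutation matrix commuting with `A₀` is the identity, because conjugation by a
permutation must preserve the diagonal of `A₀`, whose entries `6, 5, 4` are distinct. On the other
hand every row sum of the symmetric matrix `A₀` is `9`, so `A₀` commutes with the all-ones matrix
and `J/3` is a convex automorphism. Since `conv(Aut A₀) = {I}` and `J/3` is positive off the
diagonal, `DS(A₀)` is neither exact nor weakly exact. -/

open Matrix MeasureTheory Finset

noncomputable section

def A0 : Matrix (Fin 3) (Fin 3) ℝ := !![6, 1, 2; 1, 5, 3; 2, 3, 4]

section

variable {n : ℕ}

lemma pm_one : pm n 1 = 1 := by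
  ext i j
  simp [pm, Matrix.one_apply, eq_comm]

lemma mul_pm_apply (A : Matrix (Fin n) (Fin n) ℝ) (σ : Equiv.Perm (Fin n)) (i j : Fin n) :
    (A * pm n σ) i j = A i (σ j) := by
  simp [Matrix.mul_apply, pm]

lemma pm_mul_apply (A : Matrix (Fin n) (Fin n) ℝ) (σ : Equiv.Perm (Fin n)) (i j : Fin n) :
    (pm n σ * A) i j = A (σ.symm i) j := by
  simp only [Matrix.mul_apply, pm, Matrix.of_apply, ite_mul, one_mul, zero_mul]
  rw [Finset.sum_eq_single (σ.symm i)] <;> simp +contextual [Equiv.eq_symm_apply]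

lemma diag_apply_perm_of_commute_pm {A : Matrix (Fin n) (Fin n) ℝ} {σ : Equiv.Perm (Fin n)}
    (h : A * pm n σ = pm n σ * A) (i : Fin n) : A (σ i) (σ i) = A i i := by
  have hentry := congrFun (congrFun h (σ i)) i
  rwa [mul_pm_apply, pm_mul_apply, Equiv.symm_apply_apply] at hentry

lemma aut_eq_singleton_one_of_injective_diag {A : Matrix (Fin n) (Fin n) ℝ}
    (hdiag : Function.Injective A.diag) : Aut A = {1} := by
  ext P
  constructor
  · rintro ⟨⟨σ, rfl⟩, hcomm⟩
    have hσ : σ = 1 := Equiv.ext fun i => hdiag (diag_apply_perm_of_commute_pm hcomm i)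
    rw [hσ, pm_one, Set.mem_singleton_iff]
  · rintro rfl
    exact ⟨⟨1, pm_one.symm⟩, by simp⟩

lemma of_const_inv_mem_DS (hn : n ≠ 0) : (Matrix.of fun _ _ => (n : ℝ)⁻¹) ∈ DS n := by
  have hsum : ∑ _ : Fin n, (n : ℝ)⁻¹ = 1 := by simp [hn]
  exact ⟨fun _ _ => inv_nonneg.mpr n.cast_nonneg, fun _ => hsum, fun _ => hsum⟩

lemma commute_of_const_of_mulVec_one {A : Matrix (Fin n) (Fin n) ℝ} (hA : A.IsSymm) {r : ℝ}
    (hrow : A *ᵥ 1 = r • 1) (c : ℝ) :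
    A * Matrix.of (fun _ _ => c) = Matrix.of (fun _ _ => c) * A := by
  have hrowsum : ∀ i, ∑ k, A i k = r := fun i => by
    simpa [Matrix.mulVec, dotProduct] using congrFun hrow i
  have hcolsum : ∀ j, ∑ k, A k j = r := fun j => by
    simpa only [hA.apply] using hrowsum j
  ext i j
  simp only [Matrix.mul_apply, Matrix.of_apply, ← Finset.mul_sum, hrowsum,
    hcolsum, mul_comm]

lemma not_convexExact_of_aut_eq_singleton_one {A S : Matrix (Fin n) (Fin n) ℝ}
    (hAut : Aut A = {1}) (hS : S ∈ AutConv A) (hne : S ≠ 1) : ¬ ConvexExact A := by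
  intro hexact
  rw [ConvexExact, hAut, convexHull_singleton] at hexact
  exact hne (by rwa [hexact] at hS)

lemma not_weaklyExact_of_aut_eq_singleton_one {A S : Matrix (Fin n) (Fin n) ℝ}
    (hAut : Aut A = {1}) (hS : S ∈ AutConv A) {i j : Fin n} (hij : i ≠ j) (hSij : S i j ≠ 0) :
    ¬ (∀ S ∈ AutConv A, ∀ i j, (∀ P ∈ Aut A, P i j = 0) → S i j = 0) := by
  refine fun hweak => hSij (hweak S hS i j fun P hP => ?_)
  rw [hAut, Set.mem_singleton_iff] at hP
  simp [hP, hij]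

end

lemma A0_isSymm : A0.IsSymm :=
  Matrix.IsSymm.ext fun i j => by fin_cases i <;> fin_cases j <;> rfl

lemma injective_diag_A0 : Function.Injective A0.diag := by
  intro i j
  fin_cases i <;> fin_cases j <;> norm_num [A0]

lemma A0_mulVec_one : A0 *ᵥ 1 = (9 : ℝ) • 1 := by
  ext i
  fin_cases i <;> norm_num [Matrix.mulVec, dotProduct, Fin.sum_univ_three, A0, Matrix.cons_val_two]

/-- `A₀` is asymmetric (its only automorphism is the identity), the
all-ones vector is an eigenvector with eigenvalue 9, and the constant matrix `J/3` is a
convex automorphism; hence `DS(A₀)` is neither exact nor weakly exact. -/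
theorem stmt18 :
    Aut A0 = {(1 : Matrix (Fin 3) (Fin 3) ℝ)} ∧
    A0 *ᵥ (1 : Fin 3 → ℝ) = (9 : ℝ) • (1 : Fin 3 → ℝ) ∧
    (Matrix.of fun _ _ => (1 / 3 : ℝ)) ∈ AutConv A0 ∧
    ¬ ConvexExact A0 ∧
    ¬ (∀ S ∈ AutConv A0, ∀ i j, (∀ P ∈ Aut A0, P i j = 0) → S i j = 0) := by
  have hAut := aut_eq_singleton_one_of_injective_diag injective_diag_A0
  have hJ : (Matrix.of fun _ _ => (1 / 3 : ℝ)) ∈ AutConv A0 := by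
    exact ⟨by simpa using of_const_inv_mem_DS (n := 3) (by norm_num),
      commute_of_const_of_mulVec_one A0_isSymm A0_mulVec_one _⟩
  have hJ01 : (Matrix.of fun _ _ => (1 / 3 : ℝ)) 0 1 ≠ 0 := by norm_num
  refine ⟨hAut, A0_mulVec_one, hJ, ?_, not_weaklyExact_of_aut_eq_singleton_one hAut hJ
    zero_ne_one hJ01⟩
  refine not_convexExact_of_aut_eq_singleton_one hAut hJ fun h => ?_
  simpa [Matrix.one_apply] using congrFun (congrFun h 0) 0
end
end
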